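/- arXiv:2312.13912 — 2 statements merged into one kernel-verified Lean document; each statement's English description precedes it below -/
import Mathlib

section
/- Let a : ℕ → ℝ be a periodic sequence with period p ≥ 1 and let μ = (1/p) ∑_{i=0}^{p−1} a(i) be its mean. Then lim_{γ → 1⁻} (1−γ) · ∑_{i=0}^{∞} γ^i · a(i) = μ. -/
/-!
Splitting the discounted series into blocks of length `p` gives, for `|γ| < 1`,
`∑' i, γ ^ i * a i = (∑ r < p, γ ^ r * a r) / (1 - γ ^ p)`. Since
`1 - γ ^ p = (1 - γ) * ∑ k < p, γ ^ k`, the normalized discounted sum is the rational function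
`(∑ r < p, γ ^ r * a r) / ∑ k < p, γ ^ k`, which is continuous at `γ = 1` with value the mean.
-/

open Finset Function

namespace Function.Periodic

variable {𝕜 : Type*} [NormedField 𝕜] {a : ℕ → 𝕜} {p : ℕ}

theorem norm_le_sum_range_norm (ha : Periodic a p) (hp : p ≠ 0) (i : ℕ) :
    ‖a i‖ ≤ ∑ r ∈ range p, ‖a r‖ := by
  rw [← ha.map_mod_nat i]
  exact single_le_sum (f := fun r => ‖a r‖) (fun _ _ => norm_nonneg _)
    (mem_range.mpr (Nat.mod_lt i (Nat.pos_of_ne_zero hp)))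

variable [CompleteSpace 𝕜]

theorem summable_pow_mul (ha : Periodic a p) (hp : p ≠ 0) {γ : 𝕜} (hγ : ‖γ‖ < 1) :
    Summable (fun i => γ ^ i * a i) := by
  refine .of_norm_bounded
    ((summable_geometric_of_lt_one (norm_nonneg γ) hγ).mul_right (∑ r ∈ range p, ‖a r‖))
    fun i => ?_
  rw [norm_mul, norm_pow]
  exact mul_le_mul_of_nonneg_left (ha.norm_le_sum_range_norm hp i) (by positivity)

theorem tsum_pow_mul (ha : Periodic a p) (hp : p ≠ 0) {γ : 𝕜} (hγ : ‖γ‖ < 1) :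
    ∑' i, γ ^ i * a i = (∑ r ∈ range p, γ ^ r * a r) / (1 - γ ^ p) := by
  have hγp : 1 - γ ^ p ≠ 0 := sub_ne_zero.mpr <| ne_of_apply_ne norm <| by
    rw [norm_one, norm_pow]
    exact (pow_lt_one₀ (norm_nonneg γ) hγ hp).ne'
  have hshift : ∑' i, γ ^ (i + p) * a (i + p) = γ ^ p * ∑' i, γ ^ i * a i := by
    rw [← tsum_mul_left]
    exact tsum_congr fun i => by rw [ha, pow_add]; ring
  have hsplit := (ha.summable_pow_mul hp hγ).sum_add_tsum_nat_add p
  rw [hshift] at hsplit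
  rw [eq_div_iff hγp]
  linear_combination -hsplit

theorem one_sub_mul_tsum_pow_mul (ha : Periodic a p) (hp : p ≠ 0) {γ : 𝕜} (hγ : ‖γ‖ < 1) :
    (1 - γ) * ∑' i, γ ^ i * a i =
      (∑ r ∈ range p, γ ^ r * a r) / ∑ k ∈ range p, γ ^ k := by
  have hγ1 : 1 - γ ≠ 0 := sub_ne_zero.mpr <| ne_of_apply_ne norm <| by
    rw [norm_one]
    exact hγ.ne'
  rw [ha.tsum_pow_mul hp hγ, ← mul_neg_geom_sum, mul_div_assoc', mul_div_mul_left _ _ hγ1]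

end Function.Periodic

/-- Abelian theorem for periodic sequences: the normalized discounted sums
`(1-γ) ∑ γ^i a i` converge, as `γ → 1⁻`, to the mean of `a` over one period. -/
theorem stmt_10 (a : ℕ → ℝ) (p : ℕ) (hp : 1 ≤ p) (hper : ∀ i, a (i + p) = a i) :
    Filter.Tendsto (fun γ : ℝ => (1 - γ) * ∑' i, γ ^ i * a i)
      (nhdsWithin 1 (Set.Iio (1:ℝ)))
      (nhds ((∑ i ∈ Finset.range p, a i) / p)) := by
  have hp0 : p ≠ 0 := Nat.one_le_iff_ne_zero.mp hp
  have hcont : ContinuousAt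
      (fun γ : ℝ => (∑ r ∈ range p, γ ^ r * a r) / ∑ k ∈ range p, γ ^ k) 1 :=
    .div (by fun_prop) (by fun_prop) (by simpa using hp0)
  have hlim := hcont.continuousWithinAt (s := Set.Iio 1).tendsto
  simp only [one_pow, one_mul, sum_const, card_range, nsmul_eq_mul, mul_one] at hlim
  refine hlim.congr' ?_
  filter_upwards [Ioo_mem_nhdsLT (show (-1 : ℝ) < 1 by norm_num)] with γ hγ
  exact (Periodic.one_sub_mul_tsum_pow_mul hper hp0 (abs_lt.mpr hγ)).symm
end

section
/- Let a : ℕ → ℝ be bounded and for each N define the partial average A_N = (1/(N+1)) ∑_{i=0}^{N} a(i). Let (N_k) be any strictly increasing sequence of indices with N_{k+1} − N_k bounded by a constant D. Then liminf_k A_{N_k} = liminf_N A_N. -/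
/-!
Passing to a subsequence can only raise a liminf. Conversely, every large `n` lies at most `D`
steps above some `N k`, and since `(m + 1) (A m - A n) = (a (n+1) + ⋯ + a m) - (m - n) A n`, the
averages at `n` and `N k` differ by at most `2 M D / (n + 1)`. So `A` is asymptotic to a
re-indexing of `A ∘ N`, and its liminf is at least that of `A ∘ N`.
-/

open Filter Topology Finset

noncomputable def cesaroAverage (a : ℕ → ℝ) (n : ℕ) : ℝ :=
  (∑ i ∈ range (n + 1), a i) / (n + 1)

section LiminfComparison

variable {ι α : Type*} {f : Filter ι}

lemma liminf_le_liminf_comp_of_abs_le [f.NeBot] {g : Filter α} {u : α → ℝ} {M : ℝ}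
    (hu : ∀ x, |u x| ≤ M) {v : ι → α} (hv : Tendsto v f g) :
    liminf u g ≤ liminf (u ∘ v) f :=
  hv.liminf_le_liminf_comp
    (isBoundedUnder_of ⟨M, fun x => le_of_abs_le (hu x)⟩).isCoboundedUnder_ge
    (isBoundedUnder_of ⟨-M, fun x => neg_le_of_abs_le (hu x)⟩)

lemma liminf_eq_of_tendsto_sub [f.NeBot] {u v : ι → ℝ} (hv : f.IsBoundedUnder (· ≤ ·) v)
    (hv' : f.IsBoundedUnder (· ≥ ·) v) (h : Tendsto (u - v) f (𝓝 0)) :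
    liminf u f = liminf v f := by
  have hu : u = (u - v) + v := (sub_add_cancel u v).symm
  apply le_antisymm
  · calc liminf u f = liminf ((u - v) + v) f := by rw [← hu]
      _ ≤ limsup (u - v) f + liminf v f :=
        liminf_add_le h.isBoundedUnder_ge h.isBoundedUnder_le hv' hv.isCoboundedUnder_ge
      _ = liminf v f := by rw [h.limsup_eq, zero_add]
  · calc liminf v f = liminf (u - v) f + liminf v f := by rw [h.liminf_eq, zero_add]
      _ ≤ liminf ((u - v) + v) f :=
        le_liminf_add h.isBoundedUnder_ge h.isBoundedUnder_le hv' hv.isCoboundedUnder_ge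
      _ = liminf u f := by rw [← hu]

end LiminfComparison

lemma StrictMono.exists_tendsto_le_le_add {N : ℕ → ℕ} (hN : StrictMono N) {D : ℕ}
    (hD : ∀ k, N (k + 1) - N k ≤ D) :
    ∃ φ : ℕ → ℕ, Tendsto φ atTop atTop ∧
      ∀ᶠ n in atTop, N (φ n) ≤ n ∧ n ≤ N (φ n) + D := by
  have hbetween : ∀ n, ∃ k, N 0 ≤ n → N k ≤ n ∧ n < N (k + 1) := fun n => by
    by_cases hn : N 0 ≤ n
    · obtain ⟨k, hk, hk'⟩ := hN.exists_between_of_tendsto_atTop hN.tendsto_atTop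
        (Nat.lt_succ_of_le hn)
      exact ⟨k, fun _ => ⟨Nat.le_of_lt_succ hk, hk'⟩⟩
    · exact ⟨0, fun h => absurd h hn⟩
  choose φ hφ using hbetween
  refine ⟨φ, tendsto_atTop_atTop.2 fun k => ⟨N k, fun n hn => ?_⟩,
    eventually_atTop.2 ⟨N 0, fun n hn => ?_⟩⟩
  · by_contra! hlt
    have hNk := hN.monotone (show φ n + 1 ≤ k from hlt)
    have hnext := (hφ n ((hN.monotone (Nat.zero_le k)).trans hn)).2
    omega
  · have hbracket := hφ n hn
    have hgap := hD (φ n)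
    omega

section Cesaro

variable {a : ℕ → ℝ} {M : ℝ}

lemma abs_sum_Ico_le (hM : ∀ i, |a i| ≤ M) (m n : ℕ) :
    |∑ i ∈ Ico m n, a i| ≤ (n - m : ℕ) * M :=
  calc |∑ i ∈ Ico m n, a i| ≤ ∑ i ∈ Ico m n, |a i| := abs_sum_le_sum_abs _ _
    _ ≤ #(Ico m n) • M := sum_le_card_nsmul _ _ _ fun i _ => hM i
    _ = (n - m : ℕ) * M := by rw [Nat.card_Ico, nsmul_eq_mul]

lemma abs_cesaroAverage_le (hM : ∀ i, |a i| ≤ M) (n : ℕ) : |cesaroAverage a n| ≤ M := by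
  have hpos : (0 : ℝ) < n + 1 := by positivity
  rw [cesaroAverage, abs_div, abs_of_pos hpos, div_le_iff₀ hpos, range_eq_Ico]
  simpa [mul_comm] using abs_sum_Ico_le hM 0 (n + 1)

lemma abs_cesaroAverage_sub_le (hM : ∀ i, |a i| ≤ M) {m n : ℕ} (hnm : n ≤ m) :
    |cesaroAverage a m - cesaroAverage a n| ≤ 2 * M * (m - n) / (m + 1) := by
  have hpos : (0 : ℝ) < m + 1 := by positivity
  have hgap : (0 : ℝ) ≤ m - n := sub_nonneg.2 (Nat.cast_le.2 hnm)
  have hsum : ∑ i ∈ range (m + 1), a i - ∑ i ∈ range (n + 1), a i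
      = ∑ i ∈ Ico (n + 1) (m + 1), a i := (sum_Ico_eq_sub _ (by omega)).symm
  have hsplit : cesaroAverage a m - cesaroAverage a n
      = ((∑ i ∈ Ico (n + 1) (m + 1), a i) - (m - n) * cesaroAverage a n) / (m + 1) := by
    rw [← hsum, cesaroAverage, cesaroAverage]
    field_simp
    ring
  rw [hsplit, abs_div, abs_of_pos hpos, div_le_div_iff_of_pos_right hpos]
  calc |(∑ i ∈ Ico (n + 1) (m + 1), a i) - (m - n) * cesaroAverage a n|
      ≤ |∑ i ∈ Ico (n + 1) (m + 1), a i| + |(m - n) * cesaroAverage a n| := abs_sub _ _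
    _ ≤ (m - n) * M + (m - n) * M := by
      gcongr
      · simpa [Nat.cast_sub hnm] using abs_sum_Ico_le hM (n + 1) (m + 1)
      · rw [abs_mul, abs_of_nonneg hgap]
        exact mul_le_mul_of_nonneg_left (abs_cesaroAverage_le hM n) hgap
    _ = 2 * M * (m - n) := by ring

lemma tendsto_cesaroAverage_sub_comp (hM : ∀ i, |a i| ≤ M) {ψ : ℕ → ℕ} {D : ℕ}
    (hψ : ∀ᶠ n in atTop, ψ n ≤ n ∧ n ≤ ψ n + D) :
    Tendsto (fun n => cesaroAverage a n - cesaroAverage a (ψ n)) atTop (𝓝 0) := by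
  have hM0 : 0 ≤ M := (abs_nonneg _).trans (hM 0)
  have hbound : Tendsto (fun n : ℕ => 2 * M * D * (1 / ((n : ℝ) + 1))) atTop (𝓝 0) := by
    simpa using tendsto_one_div_add_atTop_nhds_zero_nat.const_mul (2 * M * D)
  refine squeeze_zero_norm' ?_ hbound
  filter_upwards [hψ] with n ⟨hle, hleD⟩
  have hgap : (n : ℝ) - ψ n ≤ D := by
    rw [sub_le_iff_le_add']
    exact_mod_cast hleD
  calc ‖cesaroAverage a n - cesaroAverage a (ψ n)‖ ≤ 2 * M * (n - ψ n) / (n + 1) :=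
        abs_cesaroAverage_sub_le hM hle
    _ ≤ 2 * M * D / (n + 1) := by gcongr
    _ = 2 * M * D * (1 / ((n : ℝ) + 1)) := by ring

end Cesaro

/-- The liminf of Cesàro averages of a bounded sequence is unchanged when evaluated
only along a strictly increasing subsequence of indices with bounded gaps. -/
theorem stmt_14 (a : ℕ → ℝ) (M : ℝ) (hM : ∀ i, |a i| ≤ M)
    (N : ℕ → ℕ) (hmono : StrictMono N) (D : ℕ) (hD : ∀ k, N (k + 1) - N k ≤ D) :
    Filter.liminf
        (fun k : ℕ => (∑ i ∈ Finset.range (N k + 1), a i) / (N k + 1)) Filter.atTop =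
    Filter.liminf
        (fun n : ℕ => (∑ i ∈ Finset.range (n + 1), a i) / (n + 1)) Filter.atTop := by
  change liminf (cesaroAverage a ∘ N) atTop = liminf (cesaroAverage a) atTop
  have hA := abs_cesaroAverage_le hM
  obtain ⟨φ, hφ, hNφ⟩ := hmono.exists_tendsto_le_le_add hD
  have hcomp : liminf (cesaroAverage a) atTop = liminf (cesaroAverage a ∘ N ∘ φ) atTop :=
    liminf_eq_of_tendsto_sub (isBoundedUnder_of ⟨M, fun n => le_of_abs_le (hA _)⟩)
      (isBoundedUnder_of ⟨-M, fun n => neg_le_of_abs_le (hA _)⟩)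
      (tendsto_cesaroAverage_sub_comp hM hNφ)
  exact le_antisymm
    ((liminf_le_liminf_comp_of_abs_le (fun k => hA (N k)) hφ).trans_eq hcomp.symm)
    (liminf_le_liminf_comp_of_abs_le hA hmono.tendsto_atTop)
end
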